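/- arXiv:2510.20530 — 2 statements merged into one kernel-verified Lean document; each statement's English description precedes it below -/
import Mathlib

section
/- Fix an integer d ≥ 2 and a unit vector ψ ∈ ℂ^d, and set Q := (|ψ⟩⟨ψ|)ᵀ = |ψ̄⟩⟨ψ̄|. Define the performance operator on ℂ^d_I ⊗ ℂ^d_O ⊗ ℂ^d_F by Ω := (1/(2 d_S)) · (1_d + Q)_O ⊗ P^S_{IF} + (1/(2 d_A)) · (1_d − Q)_O ⊗ P^A_{IF}, where 1_d + Q and 1_d − Q act on the factor O and P^S, P^A act on the factors I, F. Then the maximum of Tr(S Ω) over all single-call deterministic superchannels S equals (d+3)/(d(d+1)), and it is attained. This quantity is the optimal average fidelity of a deterministic single-call protocol transforming an arbitrary unknown U ∈ SU(d) into the state U†|ψ⟩⟨ψ|U on the known pure state ψ. -/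
open Matrix Kronecker BigOperators ComplexOrder

noncomputable section

/-- Entrywise complex conjugate `U̅` of a matrix. -/
def mconj {d : ℕ} (U : Matrix (Fin d) (Fin d) ℂ) : Matrix (Fin d) (Fin d) ℂ :=
  U.map (starRingEnd ℂ)

/-- Rank-one outer product `|v⟩⟨v|`. -/
def outer {n : Type*} (v : n → ℂ) : Matrix n n ℂ :=
  Matrix.vecMulVec v (star v)

/-- Choi vector `|U⟩⟩ = Σ_i e_i ⊗ U e_i`. -/
def choiVec {d : ℕ} (U : Matrix (Fin d) (Fin d) ℂ) : Fin d × Fin d → ℂ :=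
  fun p => U p.2 p.1

/-- `|U⟩⟩⟨⟨U|`. -/
def choiProj {d : ℕ} (U : Matrix (Fin d) (Fin d) ℂ) :
    Matrix (Fin d × Fin d) (Fin d × Fin d) ℂ :=
  outer (choiVec U)

/-- Partial trace over the first tensor factor. -/
def ptrLeft {α β : Type*} [Fintype α] (S : Matrix (α × β) (α × β) ℂ) :
    Matrix β β ℂ :=
  fun b b' => ∑ a, S (a, b) (a, b')

/-- Partial trace over the second (last) tensor factor. -/
def ptrRight {α β : Type*} [Fintype β] (S : Matrix (α × β) (α × β) ℂ) :
    Matrix α α ℂ :=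
  fun a a' => ∑ b, S (a, b) (a', b)

/-- Action `S ⋆ U := Tr_{IO}[ S · (|U̅⟩⟩⟨⟨U̅|_{IO} ⊗ 1_F) ]` of a single-call
supermap `S` on `I ⊗ O ⊗ F` applied to the unitary channel given by `U`. -/
def act {d dF : ℕ}
    (S : Matrix ((Fin d × Fin d) × Fin dF) ((Fin d × Fin d) × Fin dF) ℂ)
    (U : Matrix (Fin d) (Fin d) ℂ) : Matrix (Fin dF) (Fin dF) ℂ :=
  ptrLeft (S * (choiProj (mconj U) ⊗ₖ (1 : Matrix (Fin dF) (Fin dF) ℂ)))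

/-- A single-call deterministic superchannel (channels-to-states):
`S ≥ 0` with `Tr_F(S) = σ ⊗ 1_d`, `σ ≥ 0`, `Tr σ = 1`. -/
def IsSuperchannel {d dF : ℕ}
    (S : Matrix ((Fin d × Fin d) × Fin dF) ((Fin d × Fin d) × Fin dF) ℂ) : Prop :=
  S.PosSemidef ∧
    ∃ σ : Matrix (Fin d) (Fin d) ℂ, σ.PosSemidef ∧ σ.trace = 1 ∧
      ptrRight S = σ ⊗ₖ (1 : Matrix (Fin d) (Fin d) ℂ)

/-- The flip (SWAP) operator on `ℂ^d ⊗ ℂ^d`. -/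
def swapMat (d : ℕ) : Matrix (Fin d × Fin d) (Fin d × Fin d) ℂ :=
  fun x y => if x.1 = y.2 ∧ x.2 = y.1 then 1 else 0

/-- Projector onto the symmetric subspace, `P^S = (1 + SWAP)/2`. -/
def Psym (d : ℕ) : Matrix (Fin d × Fin d) (Fin d × Fin d) ℂ :=
  (2 : ℂ)⁻¹ • ((1 : Matrix (Fin d × Fin d) (Fin d × Fin d) ℂ) + swapMat d)

/-- Projector onto the antisymmetric subspace, `P^A = (1 − SWAP)/2`. -/
def Pasym (d : ℕ) : Matrix (Fin d × Fin d) (Fin d × Fin d) ℂ :=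
  (2 : ℂ)⁻¹ • ((1 : Matrix (Fin d × Fin d) (Fin d × Fin d) ℂ) - swapMat d)

/-- The performance operator
`Ω = (1/(2 d_S))·(1 + Q)_O ⊗ P^S_{IF} + (1/(2 d_A))·(1 − Q)_O ⊗ P^A_{IF}` with
`Q = (|ψ⟩⟨ψ|)ᵀ`, `d_S = d(d+1)/2`, `d_A = d(d−1)/2`, written on the index order
`(I × O) × F`. -/
def OmegaInv {d : ℕ} (ψ : Fin d → ℂ) :
    Matrix ((Fin d × Fin d) × Fin d) ((Fin d × Fin d) × Fin d) ℂ :=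
  fun x y =>
    (2 * ((d : ℂ) * ((d : ℂ) + 1) / 2))⁻¹ *
        ((1 : Matrix (Fin d) (Fin d) ℂ) + (outer ψ)ᵀ) x.1.2 y.1.2 *
        Psym d (x.1.1, x.2) (y.1.1, y.2)
    + (2 * ((d : ℂ) * ((d : ℂ) - 1) / 2))⁻¹ *
        ((1 : Matrix (Fin d) (Fin d) ℂ) - (outer ψ)ᵀ) x.1.2 y.1.2 *
        Pasym d (x.1.1, x.2) (y.1.1, y.2)

/-!
Write `Q = (|ψ⟩⟨ψ|)ᵀ`, `a = 1/(d(d+1))` and `b = 1/(d(d-1))`, so that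
`Ω = a (1 + Q) ⊗ P^S + b (1 - Q) ⊗ P^A`.

Upper bound (weak SDP duality): for `M = 2a Q + b (1 - Q)` the operator
`1_I ⊗ M_O ⊗ 1_F - Ω = 2a Q ⊗ P^A + (b - a)(1 - Q) ⊗ P^S` is positive semidefinite, while every
superchannel satisfies `Tr(S (1_I ⊗ M_O ⊗ 1_F)) = Tr σ · Tr M = Tr M = (d+3)/(d(d+1))`.

Attainment: `S = 2a Q ⊗ P^S + 2b (1 - Q) ⊗ P^A` is a superchannel with `σ = 1/d`, because
`Tr_F P^S = (d+1)/2` and `Tr_F P^A = (d-1)/2`, and its value is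
`2a² · 2 · d_S + 2b² (d-1) · d_A = (d+3)/(d(d+1))`.
-/

namespace Matrix

variable {l m n : Type*}

theorem trace_submatrix_equiv [Fintype m] [Fintype n] {R : Type*} [AddCommMonoid R]
    (A : Matrix n n R) (e : m ≃ n) : (A.submatrix e e).trace = A.trace :=
  Fintype.sum_equiv e _ _ fun _ => rfl

variable {𝕜 : Type*} [RCLike 𝕜]

open scoped MatrixOrder in
theorem PosSemidef.trace_mul_nonneg [Fintype n] {A B : Matrix n n 𝕜} (hA : A.PosSemidef)
    (hB : B.PosSemidef) : 0 ≤ (A * B).trace := by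
  classical
  obtain ⟨C, rfl⟩ := CStarAlgebra.nonneg_iff_eq_star_mul_self.mp hB.nonneg
  rw [← Matrix.mul_assoc, trace_mul_cycle, star_eq_conjTranspose]
  exact (hA.mul_mul_conjTranspose_same C).trace_nonneg

theorem PosSemidef.trace_mul_le_trace_mul [Fintype n] {S A B : Matrix n n 𝕜}
    (hS : S.PosSemidef) (hAB : (B - A).PosSemidef) : (S * A).trace ≤ (S * B).trace := by
  have := hS.trace_mul_nonneg hAB
  rwa [Matrix.mul_sub, trace_sub, sub_nonneg] at this

open scoped MatrixOrder in
theorem _root_.IsStarProjection.posSemidef [Fintype n] {P : Matrix n n 𝕜}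
    (hP : IsStarProjection P) : P.PosSemidef :=
  hP.nonneg.posSemidef

def middleEquiv (l m n : Type*) : (l × m) × n ≃ m × (l × n) :=
  ((Equiv.prodComm l m).prodCongr (Equiv.refl n)).trans (Equiv.prodAssoc m l n)

/-- `M_O ⊗ P_{IF}` on the index order `(I × O) × F`. -/
def kroneckerMiddle {R : Type*} [Mul R] (M : Matrix m m R) (P : Matrix (l × n) (l × n) R) :
    Matrix ((l × m) × n) ((l × m) × n) R :=
  (M ⊗ₖ P).submatrix (middleEquiv l m n) (middleEquiv l m n)

@[simp]
theorem kroneckerMiddle_apply {R : Type*} [Mul R] (M : Matrix m m R)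
    (P : Matrix (l × n) (l × n) R) (x y : (l × m) × n) :
    kroneckerMiddle M P x y = M x.1.2 y.1.2 * P (x.1.1, x.2) (y.1.1, y.2) :=
  rfl

theorem trace_kroneckerMiddle_mul [Fintype l] [Fintype m] [Fintype n] {R : Type*}
    [CommSemiring R] (M M' : Matrix m m R) (P P' : Matrix (l × n) (l × n) R) :
    (kroneckerMiddle M P * kroneckerMiddle M' P').trace = (M * M').trace * (P * P').trace := by
  rw [kroneckerMiddle, kroneckerMiddle, submatrix_mul_equiv, trace_submatrix_equiv,
    ← mul_kronecker_mul, trace_kronecker]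

theorem PosSemidef.kroneckerMiddle [Fintype l] [Fintype m] [Fintype n] {M : Matrix m m 𝕜}
    {P : Matrix (l × n) (l × n) 𝕜} (hM : M.PosSemidef) (hP : P.PosSemidef) :
    (kroneckerMiddle M P).PosSemidef :=
  (posSemidef_submatrix_equiv _).mpr (hM.kronecker hP)

theorem kroneckerMiddle_one [DecidableEq l] [DecidableEq n] {R : Type*} [MulZeroOneClass R]
    (M : Matrix m m R) :
    kroneckerMiddle M (1 : Matrix (l × n) (l × n) R) = (1 ⊗ₖ M) ⊗ₖ (1 : Matrix n n R) := by
  ext ⟨⟨i, o⟩, f⟩ ⟨⟨i', o'⟩, f'⟩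
  simp only [kroneckerMiddle_apply, kroneckerMap_apply, one_apply, Prod.mk.injEq]
  split_ifs <;> simp_all

end Matrix

open Matrix

section PartialTrace

variable {α β : Type*} [Fintype β]

theorem ptrRight_add (S T : Matrix (α × β) (α × β) ℂ) :
    ptrRight (S + T) = ptrRight S + ptrRight T := by
  ext a a'
  exact Finset.sum_add_distrib

theorem ptrRight_sub (S T : Matrix (α × β) (α × β) ℂ) :
    ptrRight (S - T) = ptrRight S - ptrRight T := by
  ext a a'
  exact Finset.sum_sub_distrib ..

theorem ptrRight_smul {R : Type*} [Monoid R] [DistribMulAction R ℂ] (c : R)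
    (S : Matrix (α × β) (α × β) ℂ) : ptrRight (c • S) = c • ptrRight S := by
  ext a a'
  exact (Finset.smul_sum ..).symm

theorem ptrRight_one [DecidableEq α] [DecidableEq β] :
    ptrRight (1 : Matrix (α × β) (α × β) ℂ) = (Fintype.card β : ℂ) • 1 := by
  ext a a'
  by_cases h : a = a' <;> simp [ptrRight, one_apply, h]

theorem ptrRight_kroneckerMiddle {γ : Type*} (M : Matrix γ γ ℂ)
    (P : Matrix (α × β) (α × β) ℂ) : ptrRight (kroneckerMiddle M P) = ptrRight P ⊗ₖ M := by
  ext ⟨a, c⟩ ⟨a', c'⟩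
  simp only [ptrRight, kroneckerMiddle_apply, kroneckerMap_apply, Finset.sum_mul]
  exact Finset.sum_congr rfl fun _ _ => mul_comm _ _

theorem trace_mul_kronecker_one [Fintype α] [DecidableEq β] (S : Matrix (α × β) (α × β) ℂ)
    (A : Matrix α α ℂ) : (S * (A ⊗ₖ (1 : Matrix β β ℂ))).trace = (ptrRight S * A).trace := by
  simp only [trace, diag, mul_apply, ptrRight, kroneckerMap_apply, one_apply, mul_ite, mul_one,
    mul_zero, Fintype.sum_prod_type, Finset.sum_ite_eq', Finset.mem_univ, if_true,
    Finset.sum_mul]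
  exact Finset.sum_congr rfl fun a _ => Finset.sum_comm

end PartialTrace

theorem IsSuperchannel.trace_mul_one_kronecker_kronecker_one {d dF : ℕ}
    {S : Matrix ((Fin d × Fin d) × Fin dF) ((Fin d × Fin d) × Fin dF) ℂ}
    (hS : IsSuperchannel S) (M : Matrix (Fin d) (Fin d) ℂ) :
    (S * ((1 ⊗ₖ M) ⊗ₖ 1)).trace = M.trace := by
  obtain ⟨-, σ, -, hσ, hS⟩ := hS
  rw [trace_mul_kronecker_one, hS, ← mul_kronecker_mul, Matrix.mul_one, Matrix.one_mul,
    trace_kronecker, hσ, one_mul]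

theorem IsStarProjection.half_one_add {𝕜 A : Type*} [RCLike 𝕜] [Ring A] [StarRing A]
    [Algebra 𝕜 A] [StarModule 𝕜 A] {u : A} (hu : IsSelfAdjoint u) (hu2 : u * u = 1) :
    IsStarProjection ((2 : 𝕜)⁻¹ • (1 + u)) := by
  refine ⟨?_, ?_⟩
  · rw [IsIdempotentElem, smul_mul_smul, add_mul, one_mul, mul_add, mul_one, hu2]
    module
  · simp [IsSelfAdjoint, star_smul, hu.star_eq]

section Flip

variable (d : ℕ)

theorem swapMat_conjTranspose : (swapMat d)ᴴ = swapMat d := by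
  ext x y
  simp only [conjTranspose_apply, swapMat]
  split_ifs <;> simp_all [eq_comm]

theorem swapMat_mul_self : swapMat d * swapMat d = 1 := by
  ext x y
  simp [swapMat, mul_apply, one_apply, Prod.ext_iff, Fintype.sum_prod_type, ite_and]

theorem trace_swapMat : (swapMat d).trace = d := by
  rw [trace, Fintype.sum_prod_type]
  simp [diag, swapMat, @eq_comm _ _ (_ : Fin d)]

theorem ptrRight_swapMat : ptrRight (swapMat d) = 1 := by
  ext i i'
  rcases eq_or_ne i i' with rfl | h
  · simp [swapMat, ptrRight, @eq_comm _ _ i]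
  · simp [swapMat, ptrRight, one_apply, h]

theorem isStarProjection_psym : IsStarProjection (Psym d) :=
  .half_one_add (swapMat_conjTranspose d) (swapMat_mul_self d)

theorem pasym_eq_one_sub_psym : Pasym d = 1 - Psym d := by
  rw [Pasym, Psym]
  module

theorem isStarProjection_pasym : IsStarProjection (Pasym d) :=
  pasym_eq_one_sub_psym d ▸ (isStarProjection_psym d).one_sub

theorem psym_add_pasym : Psym d + Pasym d = 1 := by
  rw [pasym_eq_one_sub_psym, add_sub_cancel]

theorem psym_mul_pasym : Psym d * Pasym d = 0 := by
  rw [pasym_eq_one_sub_psym, (isStarProjection_psym d).mul_one_sub_self]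

theorem pasym_mul_psym : Pasym d * Psym d = 0 := by
  rw [pasym_eq_one_sub_psym, (isStarProjection_psym d).one_sub_mul_self]

theorem trace_psym : (Psym d).trace = d * (d + 1) / 2 := by
  simp only [Psym, smul_add, trace_add, trace_smul, trace_one, Fintype.card_prod,
    Fintype.card_fin, Nat.cast_mul, smul_eq_mul, trace_swapMat]
  ring

theorem trace_pasym : (Pasym d).trace = d * (d - 1) / 2 := by
  simp only [Pasym, trace_smul, trace_sub, trace_one, Fintype.card_prod, Fintype.card_fin,
    Nat.cast_mul, trace_swapMat, smul_eq_mul]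
  ring

theorem ptrRight_psym : ptrRight (Psym d) = ((d + 1) / 2 : ℂ) • 1 := by
  rw [Psym, ptrRight_smul, ptrRight_add, ptrRight_one, Fintype.card_fin, ptrRight_swapMat]
  module

theorem ptrRight_pasym : ptrRight (Pasym d) = ((d - 1) / 2 : ℂ) • 1 := by
  rw [Pasym, ptrRight_smul, ptrRight_sub, ptrRight_one, Fintype.card_fin, ptrRight_swapMat]
  module

end Flip

section Outer

variable {n : Type*} [Fintype n] {ψ : n → ℂ}

theorem isStarProjection_transpose_outer (hψ : star ψ ⬝ᵥ ψ = 1) :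
    IsStarProjection (outer ψ)ᵀ := by
  rw [outer, transpose_vecMulVec]
  refine ⟨?_, ?_⟩
  · rw [IsIdempotentElem, vecMulVec_mul_vecMulVec, dotProduct_comm, hψ, one_smul]
  · rw [IsSelfAdjoint, star_eq_conjTranspose, conjTranspose_vecMulVec, star_star]

theorem trace_transpose_outer (hψ : star ψ ⬝ᵥ ψ = 1) : ((outer ψ)ᵀ).trace = 1 := by
  rw [trace_transpose, outer, trace_vecMulVec, dotProduct_comm, hψ]

end Outer

section Inversion

variable {d : ℕ} (ψ : Fin d → ℂ)

theorem omegaInv_eq_kroneckerMiddle :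
    OmegaInv ψ = ((d * (d + 1) : ℝ)⁻¹ : ℝ) • kroneckerMiddle (1 + (outer ψ)ᵀ) (Psym d)
      + ((d * (d - 1) : ℝ)⁻¹ : ℝ) • kroneckerMiddle (1 - (outer ψ)ᵀ) (Pasym d) := by
  ext x y
  simp only [OmegaInv, Matrix.add_apply, Matrix.smul_apply, kroneckerMiddle_apply,
    Complex.real_smul]
  push_cast
  ring

def optimalInverter : Matrix ((Fin d × Fin d) × Fin d) ((Fin d × Fin d) × Fin d) ℂ :=
  (2 / (d * (d + 1)) : ℝ) • kroneckerMiddle (outer ψ)ᵀ (Psym d)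
    + (2 / (d * (d - 1)) : ℝ) • kroneckerMiddle (1 - (outer ψ)ᵀ) (Pasym d)

def inversionDualBound : Matrix (Fin d) (Fin d) ℂ :=
  (2 / (d * (d + 1)) : ℝ) • (outer ψ)ᵀ + ((d * (d - 1) : ℝ)⁻¹ : ℝ) • (1 - (outer ψ)ᵀ)

variable {ψ}

theorem isSuperchannel_optimalInverter (hd : 2 ≤ d) (hψ : star ψ ⬝ᵥ ψ = 1) :
    IsSuperchannel (optimalInverter ψ) := by
  have hd' : (2 : ℝ) ≤ d := by exact_mod_cast hd
  have hQ := isStarProjection_transpose_outer hψ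
  refine ⟨?_, (d : ℂ)⁻¹ • 1, ?_, ?_, ?_⟩
  · exact ((hQ.posSemidef.kroneckerMiddle (isStarProjection_psym d).posSemidef).smul
      (by positivity)).add ((hQ.one_sub.posSemidef.kroneckerMiddle
        (isStarProjection_pasym d).posSemidef).smul (div_nonneg zero_le_two (by nlinarith)))
  · exact PosSemidef.one.smul (by positivity)
  · rw [trace_smul, trace_one, Fintype.card_fin, smul_eq_mul, inv_mul_cancel₀ (by positivity)]
  · have h0 : (d : ℂ) ≠ 0 := by positivity
    have h1 : (d : ℂ) - 1 ≠ 0 := sub_ne_zero.mpr (by norm_cast; omega)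
    ext ⟨i, o⟩ ⟨i', o'⟩
    simp only [optimalInverter, ptrRight_add, ptrRight_smul, ptrRight_kroneckerMiddle,
      ptrRight_psym, ptrRight_pasym, Matrix.add_apply, Matrix.smul_apply, Matrix.sub_apply,
      kroneckerMap_apply, smul_eq_mul, transpose_apply, Complex.real_smul]
    push_cast
    field_simp
    ring

theorem trace_optimalInverter_mul_omegaInv (hd : 2 ≤ d) (hψ : star ψ ⬝ᵥ ψ = 1) :
    (optimalInverter ψ * OmegaInv ψ).trace = (((d + 3) / (d * (d + 1)) : ℝ) : ℂ) := by
  have hQ := isStarProjection_transpose_outer hψ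
  have h0 : (d : ℂ) ≠ 0 := by positivity
  have h1 : (d : ℂ) - 1 ≠ 0 := sub_ne_zero.mpr (by norm_cast; omega)
  rw [optimalInverter, omegaInv_eq_kroneckerMiddle]
  simp only [Matrix.add_mul, Matrix.mul_add, Matrix.smul_mul, Matrix.mul_smul, trace_add,
    trace_smul, trace_kroneckerMiddle_mul, psym_mul_pasym, pasym_mul_psym, trace_zero, mul_zero,
    (isStarProjection_psym d).isIdempotentElem.eq, (isStarProjection_pasym d).isIdempotentElem.eq,
    hQ.isIdempotentElem.eq, hQ.one_sub.isIdempotentElem.eq, Matrix.mul_one, trace_sub, trace_one,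
    Fintype.card_fin, trace_transpose_outer hψ, trace_psym, trace_pasym, smul_zero, add_zero,
    zero_add, Complex.real_smul]
  push_cast
  field_simp
  ring

theorem omegaInv_le_inversionDualBound (hd : 2 ≤ d) (hψ : star ψ ⬝ᵥ ψ = 1) :
    ((1 ⊗ₖ inversionDualBound ψ) ⊗ₖ 1 - OmegaInv ψ).PosSemidef := by
  have hslack : (1 ⊗ₖ inversionDualBound ψ) ⊗ₖ 1 - OmegaInv ψ
      = (2 / (d * (d + 1)) : ℝ) • kroneckerMiddle (outer ψ)ᵀ (Pasym d)
        + ((d * (d - 1) : ℝ)⁻¹ - (d * (d + 1) : ℝ)⁻¹ : ℝ) •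
          kroneckerMiddle (1 - (outer ψ)ᵀ) (Psym d) := by
    rw [← kroneckerMiddle_one, omegaInv_eq_kroneckerMiddle, inversionDualBound]
    ext x y
    have hsum := congr_fun₂ (psym_add_pasym d) (x.1.1, x.2) (y.1.1, y.2)
    simp only [Matrix.add_apply, Matrix.sub_apply, Matrix.smul_apply, kroneckerMiddle_apply,
      Complex.real_smul] at hsum ⊢
    rw [← hsum]
    push_cast
    ring
  have hd' : (2 : ℝ) ≤ d := by exact_mod_cast hd
  have hQ := isStarProjection_transpose_outer hψ
  rw [hslack]
  exact ((hQ.posSemidef.kroneckerMiddle (isStarProjection_pasym d).posSemidef).smul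
      (by positivity)).add ((hQ.one_sub.posSemidef.kroneckerMiddle
        (isStarProjection_psym d).posSemidef).smul
          (sub_nonneg.mpr (inv_anti₀ (by nlinarith) (by nlinarith))))

theorem trace_inversionDualBound (hd : 2 ≤ d) (hψ : star ψ ⬝ᵥ ψ = 1) :
    (inversionDualBound ψ).trace = (((d + 3) / (d * (d + 1)) : ℝ) : ℂ) := by
  have h0 : (d : ℂ) ≠ 0 := by positivity
  have h1 : (d : ℂ) - 1 ≠ 0 := sub_ne_zero.mpr (by norm_cast; omega)
  simp only [inversionDualBound, trace_add, trace_smul, trace_sub, trace_one, Fintype.card_fin,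
    trace_transpose_outer hψ, Complex.real_smul]
  push_cast
  field_simp
  ring

theorem trace_mul_omegaInv_le (hd : 2 ≤ d) (hψ : star ψ ⬝ᵥ ψ = 1)
    {S : Matrix ((Fin d × Fin d) × Fin d) ((Fin d × Fin d) × Fin d) ℂ}
    (hS : IsSuperchannel S) :
    (S * OmegaInv ψ).trace ≤ (((d + 3) / (d * (d + 1)) : ℝ) : ℂ) :=
  calc (S * OmegaInv ψ).trace ≤ (S * ((1 ⊗ₖ inversionDualBound ψ) ⊗ₖ 1)).trace :=
        hS.1.trace_mul_le_trace_mul (omegaInv_le_inversionDualBound hd hψ)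
    _ = (inversionDualBound ψ).trace := hS.trace_mul_one_kronecker_kronecker_one _
    _ = _ := trace_inversionDualBound hd hψ

end Inversion

/-- **Optimal deterministic (approximate) unitary inversion on a known pure state,
single call.** The maximum of `Tr(S Ω)` over single-call deterministic
superchannels `S` is `(d+3)/(d(d+1))`, and it is attained. -/
theorem deterministic_inversion_optimal_fidelity
    (d : ℕ) (hd : 2 ≤ d) (ψ : Fin d → ℂ) (hψ : star ψ ⬝ᵥ ψ = 1) :
    IsGreatest
      {r : ℝ |
        ∃ S : Matrix ((Fin d × Fin d) × Fin d) ((Fin d × Fin d) × Fin d) ℂ,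
          IsSuperchannel S ∧ (S * OmegaInv ψ).trace = (r : ℂ)}
      (((d : ℝ) + 3) / ((d : ℝ) * ((d : ℝ) + 1))) := by
  refine ⟨⟨optimalInverter ψ, isSuperchannel_optimalInverter hd hψ,
    trace_optimalInverter_mul_omegaInv hd hψ⟩, ?_⟩
  rintro r ⟨S, hS, hr⟩
  have := trace_mul_omegaInv_le hd hψ hS
  rwa [hr, Complex.real_le_real] at this
end
end

section
/- Let d ≥ 2 be an integer, let ψ ∈ ℂ^d be a unit vector, let A, B ∈ M_d be positive semidefinite matrices, and let p ∈ ℝ. If (1/d)·A + Tr(B)·1_d − (1/d)·B = p·|ψ⟩⟨ψ|, then B = 0, A = p·d·|ψ⟩⟨ψ|, and p ≥ 0. -/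
open Matrix Kronecker BigOperators ComplexOrder

noncomputable section

/-! Compare the trace of the identity with its expectation in `ψ`. A positive matrix has
expectation at most its trace, so the difference of the two scalar equations, times `d`, writes
`(d² - d - 1) Tr B` as minus a sum of nonnegative terms; hence `Tr B = 0` and `B = 0`. The identity
then reads `d⁻¹ A = p |ψ⟩⟨ψ|`, and `Tr A ≥ 0` gives `p ≥ 0`. -/

section Outer

variable {n : Type*}

lemma isHermitian_outer (v : n → ℂ) : (outer v).IsHermitian := by
  simp [outer, IsHermitian]

variable [Fintype n]

lemma trace_outer (v : n → ℂ) : (outer v).trace = star v ⬝ᵥ v := by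
  rw [outer, trace_vecMulVec, dotProduct_comm]

lemma trace_mul_outer (A : Matrix n n ℂ) (v : n → ℂ) :
    (A * outer v).trace = star v ⬝ᵥ (A *ᵥ v) := by
  rw [outer, mul_vecMulVec, trace_vecMulVec, dotProduct_comm]

lemma isIdempotentElem_outer {ψ : n → ℂ} (hψ : star ψ ⬝ᵥ ψ = 1) :
    IsIdempotentElem (outer ψ) := by
  rw [IsIdempotentElem, outer, vecMulVec_mul_vecMulVec, hψ, one_smul]

/-- Compressing `A` to the orthogonal complement of `ψ` leaves a positive matrix of trace
`Tr A - ⟨ψ|A|ψ⟩`. -/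
lemma Matrix.PosSemidef.dotProduct_mulVec_le_trace [DecidableEq n] {A : Matrix n n ℂ}
    (hA : A.PosSemidef) {ψ : n → ℂ} (hψ : star ψ ⬝ᵥ ψ = 1) :
    star ψ ⬝ᵥ (A *ᵥ ψ) ≤ A.trace := by
  set Q := 1 - outer ψ
  have hQ : Qᴴ = Q := by simp [Q, (isHermitian_outer ψ).eq]
  have hQQ : Q * Q = Q := by
    simp only [Q, sub_mul, mul_sub, one_mul, mul_one, (isIdempotentElem_outer hψ).eq, sub_self,
      sub_zero]
  have htrace : (Qᴴ * A * Q).trace = A.trace - star ψ ⬝ᵥ (A *ᵥ ψ) := by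
    rw [trace_mul_cycle, hQ, hQQ, trace_mul_comm, mul_sub, mul_one, trace_sub, trace_mul_outer]
  have := (hA.conjTranspose_mul_mul_same Q).trace_nonneg
  rw [htrace] at this
  exact sub_nonneg.mp this

end Outer

/-- **Key matrix identity for the transposition SDP.** If `A, B ≥ 0` and
`(1/d)·A + Tr(B)·1 − (1/d)·B = p·|ψ⟩⟨ψ|` for a unit vector `ψ`, then `B = 0`,
`A = p·d·|ψ⟩⟨ψ|`, and `p ≥ 0`. -/
theorem transposition_sdp_identity
    (d : ℕ) (hd : 2 ≤ d) (ψ : Fin d → ℂ) (hψ : star ψ ⬝ᵥ ψ = 1)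
    (A B : Matrix (Fin d) (Fin d) ℂ) (hA : A.PosSemidef) (hB : B.PosSemidef)
    (p : ℝ)
    (h : ((d : ℂ))⁻¹ • A + B.trace • (1 : Matrix (Fin d) (Fin d) ℂ)
        - ((d : ℂ))⁻¹ • B = (p : ℂ) • outer ψ) :
    B = 0 ∧ A = ((p : ℂ) * (d : ℂ)) • outer ψ ∧ 0 ≤ p := by
  have hd0 : (d : ℂ) ≠ 0 := by norm_cast; omega
  have hcoef : (0 : ℂ) < (d : ℂ) ^ 2 - d - 1 := by
    have : (0 : ℝ) < (d : ℝ) ^ 2 - d - 1 := by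
      have : (2 : ℝ) ≤ d := by exact_mod_cast hd
      nlinarith
    exact_mod_cast this
  have htrace := congrArg trace h
  have hexpect := congrArg (fun M ↦ (M * outer ψ).trace) h
  simp only [trace_sub, trace_add, trace_smul, trace_one, Fintype.card_fin, trace_outer, hψ,
    smul_eq_mul, mul_one] at htrace
  simp only [sub_mul, add_mul, smul_mul, one_mul, trace_sub, trace_add, trace_smul, smul_eq_mul,
    (isIdempotentElem_outer hψ).eq, trace_outer, hψ, mul_one, trace_mul_outer] at hexpect
  -- `d · (htrace - hexpect)` is a sum of three nonnegative terms
  have hsum : (A.trace - star ψ ⬝ᵥ (A *ᵥ ψ)) + (((d : ℂ) ^ 2 - d - 1) * B.trace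
      + star ψ ⬝ᵥ (B *ᵥ ψ)) = 0 := by
    field_simp at htrace hexpect
    linear_combination htrace - hexpect
  have hB0 : B = 0 := by
    have hcB := mul_nonneg hcoef.le hB.trace_nonneg
    have hBψ := hB.dotProduct_mulVec_nonneg ψ
    rw [add_eq_zero_iff_of_nonneg (sub_nonneg.mpr (hA.dotProduct_mulVec_le_trace hψ))
      (add_nonneg hcB hBψ), add_eq_zero_iff_of_nonneg hcB hBψ] at hsum
    exact hB.trace_eq_zero_iff.mp ((mul_eq_zero.mp hsum.2.1).resolve_left hcoef.ne')
  have hAeq : A = ((p : ℂ) * d) • outer ψ := by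
    rw [hB0, trace_zero, zero_smul, smul_zero, add_zero, sub_zero] at h
    rw [mul_comm, ← smul_smul, ← h, smul_inv_smul₀ hd0]
  refine ⟨hB0, hAeq, ?_⟩
  have hpd : (0 : ℂ) ≤ (p : ℂ) * d := by
    simpa [hAeq, trace_outer, hψ] using hA.trace_nonneg
  exact nonneg_of_mul_nonneg_left (by exact_mod_cast hpd) (by positivity)
end
end
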